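/- Let R be a commutative Noetherian ring, F : 0 → F_b → ⋯ → F_a → 0 a finite free R-complex with differentials ∂_n, and n an integer with a ≤ n ≤ b. If p is a prime ideal of R such that I_{s_i}(∂_{i+1})_p = R_p for every i with a ≤ i ≤ n, where s_i = Σ_{j ≤ i} (−1)^{i−j} rank_R F_j, then H_i(F)_p = 0 for all i ≤ n. -/

import Mathlib

open Matrix

/-- Convert a Krull-dimension value (in `WithBot ℕ∞`) to an extended real. -/
noncomputable def krullDimToEReal (d : WithBot ℕ∞) : EReal :=
  WithBot.recBotCoe ⊥ (fun d' => WithTop.recTopCoe ⊤ (fun m : ℕ => ((m : ℝ) : EReal)) d') d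

/-- Krull dimension of a ring, as an extended real. -/
noncomputable def ringDimE (R : Type) [CommRing R] : EReal := krullDimToEReal (ringKrullDim R)

/-- Krull dimension of a module: the dimension of `R ⧸ ann M`, `-∞` for the zero module. -/
noncomputable def moduleDimE (R : Type) [CommRing R] (M : Type) [AddCommGroup M] [Module R M] :
    EReal :=
  krullDimToEReal (ringKrullDim (R ⧸ Module.annihilator R M))

/-- A finite free complex `F : 0 → F_b → ⋯ → F_a → 0`, encoded by the ranks of the `F_i`
and the matrices of the differentials: `d n` is the matrix of `∂_{n+1} : F_{n+1} → F_n`. -/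
structure FinFreeComplex (R : Type) [CommRing R] where
  a : ℤ
  b : ℤ
  rank : ℤ → ℕ
  d : ∀ n : ℤ, Matrix (Fin (rank n)) (Fin (rank (n + 1))) R
  rank_eq_zero : ∀ n : ℤ, n < a ∨ b < n → rank n = 0
  d_comp_d : ∀ n : ℤ, d n * d (n + 1) = 0

namespace FinFreeComplex

variable {R : Type} [CommRing R] (F : FinFreeComplex R)

/-- The `n`-th homology of `F`: `ker ∂_n / im ∂_{n+1}`. -/
abbrev homologyAt (n : ℤ) : Type :=
  ↥(LinearMap.ker (F.d (n - 1)).mulVecLin) ⧸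
    (LinearMap.range (F.d (n - 1 + 1)).mulVecLin).comap
      (LinearMap.ker (F.d (n - 1)).mulVecLin).subtype

/-- Foxby's Krull dimension of the complex `F`: `sup { dim H_n(F) - n }`. -/
noncomputable def dim : EReal :=
  ⨆ n : ℤ, (moduleDimE R (F.homologyAt n) - ((n : ℝ) : EReal))

/-- `s_n = Σ_{i ≤ n} (-1)^{n-i} rank F_i`. -/
noncomputable def s (n : ℤ) : ℤ := ∑ᶠ i ∈ Set.Iic n, (-1 : ℤ) ^ (n - i).toNat * (F.rank i : ℤ)

end FinFreeComplex

/-- The ideal of `s × s` minors of a matrix, with the conventions that it is the unit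
ideal when `s ≤ 0` or when the matrix is empty (`0 × 0`), and that an `s × s` minor of a
nonempty matrix is `0` when `s` exceeds the number of rows or columns. -/
noncomputable def minorsIdeal {R : Type} [CommRing R] {p q : ℕ} (A : Matrix (Fin p) (Fin q) R)
    (s : ℤ) : Ideal R :=
  if s ≤ 0 then ⊤
  else if p = 0 ∧ q = 0 then ⊤
  else Ideal.span {x : R | ∃ (f : Fin s.toNat → Fin p) (g : Fin s.toNat → Fin q),
    Function.Injective f ∧ Function.Injective g ∧ x = (A.submatrix f g).det}

/-!
Over the local ring `R_p` one shows, by induction along the complex, that the cycles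
`ker ∂_{j+1}` are free of rank `s_{j+1}`. If `ker ∂_{j+1} ≅ R_p^t`, then `∂_{j+2}` factors as
`F_{j+2} → R_p^t ≅ ker ∂_{j+1} ⊆ F_{j+1}`, so each `t × t` minor of `∂_{j+2}` is a minor of the
inclusion times a maximal minor of the first factor. A unit `t × t` minor therefore makes the
first factor surjective: `∂_{j+2}` maps onto `ker ∂_{j+1}`, and its kernel is a direct summand
of `F_{j+2}`, hence free of rank `rank F_{j+2} - s_{j+1} = s_{j+2}`. Exactness over `R_p`
descends to `H_i(F)_p = 0` by clearing denominators.
-/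

section

variable {R S : Type} [CommRing R] [CommRing S]

theorem IsLocalRing.exists_isUnit_of_span_eq_top [IsLocalRing S] {X : Set S}
    (h : Ideal.span X = ⊤) : ∃ x ∈ X, IsUnit x := by
  by_contra! hX
  have : Ideal.span X ≤ IsLocalRing.maximalIdeal S :=
    Ideal.span_le.mpr fun x hx => (IsLocalRing.mem_maximalIdeal x).mpr (hX x hx)
  exact (IsLocalRing.maximalIdeal.isMaximal S).ne_top (top_le_iff.mp (h ▸ this))

theorem Matrix.mulVecLin_surjective_of_isUnit_det_submatrix {m n : Type} [Fintype m]
    [DecidableEq m] [Fintype n] [DecidableEq n] (M : Matrix m n S) (g : m → n)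
    (hg : IsUnit (M.submatrix id g).det) : Function.Surjective M.mulVecLin := by
  intro x
  refine ⟨(1 : Matrix n n S).submatrix id g *ᵥ ((M.submatrix id g)⁻¹ *ᵥ x), ?_⟩
  rw [Matrix.mulVecLin_apply, Matrix.mulVec_mulVec,
    ← Equiv.coe_refl, Matrix.mul_submatrix_one]
  simp [Matrix.mulVec_mulVec, Matrix.mul_nonsing_inv _ hg]

theorem Matrix.mulVecLin_surjective_of_minorsIdeal_mul_eq_top [IsLocalRing S] {r t q : ℕ}
    (D : Matrix (Fin r) (Fin t) S) (M : Matrix (Fin t) (Fin q) S)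
    (hD : Function.Injective D.mulVecLin) (h : minorsIdeal (D * M) t = ⊤) :
    Function.Surjective M.mulVecLin := by
  rcases Nat.eq_zero_or_pos t with rfl | ht
  · exact Function.surjective_to_subsingleton _
  have hr : r ≠ 0 := by
    rintro rfl
    have : NeZero t := ⟨ht.ne'⟩
    exact not_subsingleton (Fin t → S) hD.subsingleton
  rw [minorsIdeal, if_neg (by omega), if_neg (by tauto)] at h
  simp only [Int.toNat_natCast] at h
  obtain ⟨_, ⟨f, g, -, -, rfl⟩, hfg⟩ := IsLocalRing.exists_isUnit_of_span_eq_top h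
  rw [Matrix.submatrix_mul D M f id g Function.bijective_id, Matrix.det_mul] at hfg
  exact M.mulVecLin_surjective_of_isUnit_det_submatrix g (isUnit_of_mul_isUnit_right hfg)

theorem minorsIdeal_map (φ : R →+* S) {p q : ℕ} (A : Matrix (Fin p) (Fin q) R) (s : ℤ) :
    minorsIdeal (A.map φ) s = Ideal.map φ (minorsIdeal A s) := by
  unfold minorsIdeal
  split_ifs
  · exact Ideal.map_top φ |>.symm
  · exact Ideal.map_top φ |>.symm
  rw [Ideal.map_span]
  congr 1
  ext x
  simp [RingHom.map_det, RingHom.mapMatrix_apply, Matrix.submatrix_map, eq_comm, and_assoc]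

theorem LinearMap.exists_linearEquiv_ker_of_surjective [IsLocalRing S] {q t : ℕ}
    (C : (Fin q → S) →ₗ[S] (Fin t → S)) (hC : Function.Surjective C) :
    ∃ k, k + t = q ∧ Nonempty (LinearMap.ker C ≃ₗ[S] (Fin k → S)) := by
  obtain ⟨σ, hσ⟩ := C.exists_rightInverse_of_surjective (LinearMap.range_eq_top.mpr hC)
  have hCσ (y : Fin t → S) : C (σ y) = y := LinearMap.congr_fun hσ y
  let π : (Fin q → S) →ₗ[S] LinearMap.ker C :=
    (LinearMap.id - σ ∘ₗ C).codRestrict _ fun x => by simp [hCσ]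
  have hπ : π ∘ₗ (LinearMap.ker C).subtype = LinearMap.id := by
    ext ⟨x, hx⟩ : 2
    simp [π, LinearMap.mem_ker.mp hx]
  have : Module.Projective S (LinearMap.ker C) := .of_split _ π hπ
  have : Module.Finite S (LinearMap.ker C) :=
    .of_surjective π fun x => ⟨x, LinearMap.congr_fun hπ x⟩
  have : Module.Free S (LinearMap.ker C) := Module.free_of_flat_of_isLocalRing
  let e : (LinearMap.ker C × (Fin t → S)) ≃ₗ[S] (Fin q → S) :=
    .ofLinearMap (f := (LinearMap.ker C).subtype.coprod σ) (g := π.prod C)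
      (by ext x : 1; simp [π])
      (by
        apply LinearMap.ext
        rintro ⟨⟨x, hx⟩, y⟩
        ext <;> simp [π, hCσ, LinearMap.mem_ker.mp hx])
  exact ⟨_, by simpa using e.finrank_eq, ⟨.ofFinrankEq _ _ (by simp)⟩⟩

theorem Matrix.exists_smul_mem_range_mulVecLin_of_map [Algebra R S] (M : Submonoid R)
    [IsLocalization M S] {m n : Type} [Fintype m] [Fintype n] (A : Matrix m n R) {x : m → R}
    (hx : algebraMap R S ∘ x ∈ LinearMap.range (A.map (algebraMap R S)).mulVecLin) :
    ∃ c ∈ M, c • x ∈ LinearMap.range A.mulVecLin := by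
  let ℓ (k : Type) : (k → R) →ₗ[R] (k → S) :=
    LinearMap.pi fun i => Algebra.linearMap R S ∘ₗ LinearMap.proj i
  obtain ⟨y, hy⟩ := hx
  obtain ⟨⟨z, b⟩, hzb⟩ := IsLocalizedModule.surj M (ℓ n) y
  have hz : algebraMap R S ∘ z = (b : R) • y := (Submonoid.smul_def b y ▸ hzb).symm
  have : ℓ m (A *ᵥ z) = ℓ m (b • x) := by
    funext i
    change algebraMap R S ((A *ᵥ z) i) = algebraMap R S ((b • x) i)
    rw [RingHom.map_mulVec, hz, Matrix.mulVec_smul, ← Matrix.mulVecLin_apply, hy]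
    simp [Submonoid.smul_def, Algebra.smul_def]
  obtain ⟨c, hc⟩ := IsLocalizedModule.exists_of_eq (S := M) this
  refine ⟨c * b, M.mul_mem c.2 b.2, c • z, ?_⟩
  simpa [Matrix.mulVec_smul, mul_smul, Submonoid.smul_def] using hc

theorem Matrix.comp_mem_ker_mulVecLin_map (φ : R →+* S)
    {m n : Type} [Fintype n] (A : Matrix m n R) {x : n → R}
    (hx : x ∈ LinearMap.ker A.mulVecLin) : φ ∘ x ∈ LinearMap.ker (A.map φ).mulVecLin := by
  funext k
  have h := congrArg φ (congrFun hx k)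
  rw [Matrix.mulVecLin_apply, RingHom.map_mulVec] at h
  simpa using h

end

namespace FinFreeComplex

variable {S : Type} [CommRing S]

theorem s_eq_sum (F : FinFreeComplex S) (n : ℤ) :
    F.s n = ∑ i ∈ Finset.Icc F.a n, (-1 : ℤ) ^ (n - i).toNat * (F.rank i : ℤ) := by
  refine finsum_mem_eq_sum_of_inter_support_eq _ (Set.ext fun i => ?_)
  simp only [Set.mem_inter_iff, Set.mem_Iic, Finset.coe_Icc, Set.mem_Icc, Function.mem_support]
  refine ⟨fun ⟨hin, hi⟩ => ⟨⟨?_, hin⟩, hi⟩, fun ⟨⟨_, hin⟩, hi⟩ => ⟨hin, hi⟩⟩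
  by_contra hai
  exact hi (by simp [F.rank_eq_zero i (Or.inl (by omega))])

theorem s_eq_zero_of_lt (F : FinFreeComplex S) {n : ℤ} (hn : n < F.a) : F.s n = 0 := by
  rw [s_eq_sum, Finset.Icc_eq_empty_of_lt hn, Finset.sum_empty]

theorem minorsIdeal_eq_top_of_lt (F : FinFreeComplex S) {n : ℤ} (hn : n < F.a) :
    minorsIdeal (F.d n) (F.s n) = ⊤ := by
  rw [F.s_eq_zero_of_lt hn, minorsIdeal, if_pos le_rfl]

theorem s_add_one (F : FinFreeComplex S) (n : ℤ) :
    F.s (n + 1) = F.rank (n + 1) - F.s n := by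
  by_cases han : F.a ≤ n + 1
  · rw [s_eq_sum, s_eq_sum, ← Finset.insert_Icc_right_eq_Icc_add_one han,
      Finset.sum_insert (by simp), sub_self, Int.toNat_zero, pow_zero, one_mul, sub_eq_add_neg,
      ← Finset.sum_neg_distrib]
    refine congrArg _ (Finset.sum_congr rfl fun i hi => ?_)
    rw [show (n + 1 - i).toNat = (n - i).toNat + 1 by simp at hi; omega, pow_succ]
    ring
  · rw [F.s_eq_zero_of_lt (by omega), F.s_eq_zero_of_lt (by omega),
      F.rank_eq_zero (n + 1) (Or.inl (by omega))]
    rfl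

/-- The cycles `ker ∂_{j+1}` (the kernel of `F.d j`) are free of rank `s_{j+1}`. -/
def CyclesFree (F : FinFreeComplex S) (j : ℤ) : Prop :=
  ∃ t : ℕ, (t : ℤ) = F.s (j + 1) ∧ Nonempty (LinearMap.ker (F.d j).mulVecLin ≃ₗ[S] (Fin t → S))

theorem cyclesFree_of_lt (F : FinFreeComplex S) {j : ℤ} (hj : j < F.a) : F.CyclesFree j := by
  have hZ : LinearMap.ker (F.d j).mulVecLin = ⊤ := by
    have : IsEmpty (Fin (F.rank j)) := by rw [F.rank_eq_zero j (Or.inl hj)]; infer_instance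
    exact LinearMap.ker_eq_top.mpr (Subsingleton.elim _ _)
  refine ⟨F.rank (j + 1), ?_, ⟨(LinearEquiv.ofEq _ _ hZ).trans (LinearEquiv.ofTop ⊤ rfl)⟩⟩
  rw [s_add_one, F.s_eq_zero_of_lt hj, sub_zero]

def map {R : Type} [CommRing R] (F : FinFreeComplex R) (φ : R →+* S) : FinFreeComplex S where
  a := F.a
  b := F.b
  rank := F.rank
  d n := (F.d n).map φ
  rank_eq_zero := F.rank_eq_zero
  d_comp_d n := by rw [← Matrix.map_mul, F.d_comp_d, Matrix.map_zero _ (map_zero φ)]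

variable [IsLocalRing S]

theorem CyclesFree.range_eq_ker_and_succ {F : FinFreeComplex S} {j : ℤ} (h : F.CyclesFree j)
    (hmin : minorsIdeal (F.d (j + 1)) (F.s (j + 1)) = ⊤) :
    LinearMap.range (F.d (j + 1)).mulVecLin = LinearMap.ker (F.d j).mulVecLin ∧
      F.CyclesFree (j + 1) := by
  obtain ⟨t, ht, ⟨e⟩⟩ := h
  set Z := LinearMap.ker (F.d j).mulVecLin
  let ρ : (Fin t → S) →ₗ[S] (Fin (F.rank (j + 1)) → S) := Z.subtype ∘ₗ e.symm.toLinearMap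
  have hρ : Function.Injective ρ := Subtype.val_injective.comp e.symm.injective
  have hρZ : LinearMap.range ρ = Z := by
    rw [LinearMap.range_comp, LinearEquiv.range, Submodule.map_top, Submodule.range_subtype]
  have hdZ (x) : (F.d (j + 1)).mulVecLin x ∈ Z := by
    rw [LinearMap.mem_ker, ← LinearMap.comp_apply, ← Matrix.mulVecLin_mul, F.d_comp_d]
    simp
  let C := e.toLinearMap ∘ₗ (F.d (j + 1)).mulVecLin.codRestrict Z hdZ
  have hρC : ρ ∘ₗ C = (F.d (j + 1)).mulVecLin := by
    refine LinearMap.ext fun x => ?_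
    simp [ρ, C]
  have hC : Function.Surjective C := by
    have key := (LinearMap.toMatrix' ρ).mulVecLin_surjective_of_minorsIdeal_mul_eq_top
      (LinearMap.toMatrix' C)
    simp only [← Matrix.toLin'_apply', Matrix.toLin'_toMatrix'] at key
    refine key hρ ?_
    rwa [← LinearMap.toMatrix'_comp, hρC, ← Matrix.toLin'_apply', LinearMap.toMatrix'_toLin', ht]
  obtain ⟨k, hk, ⟨e'⟩⟩ := C.exists_linearEquiv_ker_of_surjective hC
  have hker : LinearMap.ker (F.d (j + 1)).mulVecLin = LinearMap.ker C := by
    rw [← hρC, LinearMap.ker_comp, LinearMap.ker_eq_bot.mpr hρ, Submodule.comap_bot]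
  refine ⟨?_, k, ?_, ⟨(LinearEquiv.ofEq _ _ hker).trans e'⟩⟩
  · rw [← hρC, LinearMap.range_comp, LinearMap.range_eq_top.mpr hC, Submodule.map_top, hρZ]
  · rw [s_add_one, ← ht, ← hk]
    push_cast
    ring

theorem cyclesFree_of_minorsIdeal_eq_top {F : FinFreeComplex S} {n : ℤ}
    (hmin : ∀ i ≤ n, minorsIdeal (F.d i) (F.s i) = ⊤) {j : ℤ} (hj : j ≤ n) : F.CyclesFree j := by
  obtain hja | haj := lt_or_ge j (F.a - 1)
  · exact F.cyclesFree_of_lt (by omega)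
  induction j, haj using Int.leInduction with
  | base => exact F.cyclesFree_of_lt (by omega)
  | succ k _ ih => exact ((ih (by omega)).range_eq_ker_and_succ (hmin (k + 1) hj)).2

theorem range_eq_ker_of_minorsIdeal_eq_top {F : FinFreeComplex S} {n : ℤ}
    (hmin : ∀ i ≤ n, minorsIdeal (F.d i) (F.s i) = ⊤) {i : ℤ} (hi : i ≤ n) :
    LinearMap.range (F.d (i - 1 + 1)).mulVecLin = LinearMap.ker (F.d (i - 1)).mulVecLin := by
  have hcyc : F.CyclesFree (i - 1) := cyclesFree_of_minorsIdeal_eq_top hmin (by omega)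
  refine (hcyc.range_eq_ker_and_succ ?_).1
  rw [sub_add_cancel]
  exact hmin i hi

end FinFreeComplex

theorem FinFreeComplex.homology_vanish_of_minors_localize_unit_general (R : Type) [CommRing R]
    (F : FinFreeComplex R) (n : ℤ)
    (p : Ideal R) [p.IsPrime]
    (hunit : ∀ i : ℤ, F.a ≤ i → i ≤ n →
      Ideal.map (algebraMap R (Localization.AtPrime p)) (minorsIdeal (F.d i) (F.s i)) = ⊤) :
    ∀ i : ℤ, i ≤ n → Subsingleton (LocalizedModule p.primeCompl (F.homologyAt i)) := by
  intro i hi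
  set φ := algebraMap R (Localization.AtPrime p)
  have hmin (k : ℤ) (hk : k ≤ n) : minorsIdeal ((F.map φ).d k) ((F.map φ).s k) = ⊤ := by
    by_cases hak : k < F.a
    · exact (F.map φ).minorsIdeal_eq_top_of_lt hak
    · exact (minorsIdeal_map φ _ _).trans (hunit k (by omega) hk)
  have hexact : LinearMap.range ((F.d (i - 1 + 1)).map φ).mulVecLin =
      LinearMap.ker ((F.d (i - 1)).map φ).mulVecLin :=
    range_eq_ker_of_minorsIdeal_eq_top hmin hi
  rw [LocalizedModule.subsingleton_iff]
  intro m
  obtain ⟨⟨x, hx⟩, rfl⟩ := Submodule.Quotient.mk_surjective _ m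
  obtain ⟨c, hc, hcx⟩ := (F.d (i - 1 + 1)).exists_smul_mem_range_mulVecLin_of_map p.primeCompl
    (hexact ▸ (F.d (i - 1)).comp_mem_ker_mulVecLin_map φ hx)
  exact ⟨c, hc, (Submodule.Quotient.mk_eq_zero _).mpr hcx⟩

/-- If `I_{s_i}(∂_{i+1})` generates the unit ideal in `R_p` for every `i` with `a ≤ i ≤ n`,
then the localized homology modules `H_i(F)_p` vanish for all `i ≤ n`. -/
theorem FinFreeComplex.homology_vanish_of_minors_localize_unit (R : Type) [CommRing R]
    [IsNoetherianRing R] (F : FinFreeComplex R) (n : ℤ) (han : F.a ≤ n) (hnb : n ≤ F.b)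
    (p : Ideal R) [p.IsPrime]
    (hunit : ∀ i : ℤ, F.a ≤ i → i ≤ n →
      Ideal.map (algebraMap R (Localization.AtPrime p)) (minorsIdeal (F.d i) (F.s i)) = ⊤) :
    ∀ i : ℤ, i ≤ n → Subsingleton (LocalizedModule p.primeCompl (F.homologyAt i)) :=
  FinFreeComplex.homology_vanish_of_minors_localize_unit_general R F n p hunit
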